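/- arXiv:1001.3762 — 5 statements merged into one kernel-verified Lean document; each statement's English description precedes it below -/
import Mathlib

section
/- Let $f:[a,b]\to(c,d)$ be continuous and let $\varphi,\psi:(c,d)\to\mathbb{R}$ be continuous with $\varphi$ injective, $\psi$ strictly increasing, and $\psi\circ\varphi^{-1}$ convex on the image of $\varphi$. Then $\psi^{-1}\left(\frac{1}{b-a}\int_a^b \psi(f(t))\,dt\right) \geq \varphi^{-1}\left(\frac{1}{b-a}\int_a^b \varphi(f(t))\,dt\right)$. -/
/-!
By the mean value theorem for integrals, the two means are `f x` and `f y` for some points `x`, `y`.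
Jensen's inequality for `ψ ∘ φ⁻¹` applied to `φ ∘ f` gives `ψ (f x) ≤ ψ (f y)`, hence `f x ≤ f y`.
Jensen needs `ψ ∘ φ⁻¹` continuous on the range of `φ ∘ f`; this holds because a left inverse of a
map continuous on a compact set is continuous on its image.
-/

open MeasureTheory Set
open scoped Interval

theorem IsCompact.continuousOn_image_of_leftInvOn {α β : Type*} [TopologicalSpace α]
    [TopologicalSpace β] [T2Space β] {f : α → β} {s : Set α} (hs : IsCompact s)
    (hf : ContinuousOn f s) {finv : β → α} (hleft : LeftInvOn finv f s) :
    ContinuousOn finv (f '' s) := by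
  refine continuousOn_iff_isClosed.2 fun t ht => ⟨f '' (t ∩ s), ?_, ?_⟩
  · exact ((hs.inter_left ht).image_of_continuousOn (hf.mono inter_subset_right)).isClosed
  · rw [inter_eq_self_of_subset_left (image_mono inter_subset_right), hleft.image_inter']

theorem ConvexOn.map_interval_average_le {u g : ℝ → ℝ} {a b : ℝ} (hab : a ≠ b)
    (hu : ContinuousOn u [[a, b]]) (hg : ConvexOn ℝ (u '' [[a, b]]) g)
    (hgc : ContinuousOn g (u '' [[a, b]])) :
    g (⨍ t in a..b, u t) ≤ ⨍ t in a..b, g (u t) := by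
  have hint : ∀ {v : ℝ → ℝ}, ContinuousOn v [[a, b]] → IntegrableOn v (Ι a b) :=
    fun hv => intervalIntegrable_iff.1 hv.intervalIntegrable
  refine hg.map_set_average_le hgc (isCompact_uIcc.image_of_continuousOn hu).isClosed ?_ ?_
    ?_ (hint hu) (hint (hgc.comp hu (mapsTo_image u _)))
  · simpa [sub_eq_zero] using hab.symm
  · simp
  · rw [ae_restrict_iff' measurableSet_uIoc]
    exact ae_of_all _ fun t ht => mem_image_of_mem u (uIoc_subset_uIcc ht)

theorem ConvexOn.map_interval_average_comp_leftInvOn_le {a b : ℝ} (hab : a ≠ b)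
    {f φ ψ φinv : ℝ → ℝ} {s : Set ℝ} (hf : ContinuousOn f [[a, b]]) (hfs : MapsTo f [[a, b]] s)
    (hφ : ContinuousOn φ s) (hψ : ContinuousOn ψ s) (hφinv : LeftInvOn φinv φ s)
    (hconv : ConvexOn ℝ (φ '' s) (ψ ∘ φinv)) :
    ψ (φinv (⨍ t in a..b, φ (f t))) ≤ ⨍ t in a..b, ψ (f t) := by
  have hK : f '' [[a, b]] ⊆ s := hfs.image_subset
  have hφf : ContinuousOn (φ ∘ f) [[a, b]] := hφ.comp hf hfs
  have hφinv_cont : ContinuousOn φinv (φ '' (f '' [[a, b]])) :=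
    (isCompact_uIcc.image_of_continuousOn hf).continuousOn_image_of_leftInvOn (hφ.mono hK)
      (hφinv.mono hK)
  have hφinv_maps : MapsTo φinv (φ '' (f '' [[a, b]])) s := by
    rintro _ ⟨x, hx, rfl⟩
    rw [hφinv (hK hx)]
    exact hK hx
  rw [← image_comp] at hφinv_cont hφinv_maps
  calc ψ (φinv (⨍ t in a..b, φ (f t)))
      ≤ ⨍ t in a..b, ψ (φinv (φ (f t))) :=
        (hconv.subset (image_comp φ f _ ▸ image_mono hK)
          (isPreconnected_uIcc.image _ hφf).convex).map_interval_average_le hab hφf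
          (hψ.comp hφinv_cont hφinv_maps)
    _ = ⨍ t in a..b, ψ (f t) := setAverage_congr_fun measurableSet_uIoc <|
        ae_of_all _ fun t ht => by rw [hφinv (hfs (uIoc_subset_uIcc ht))]

theorem quasi_arithmetic_mean_comparison_general
    (a b c d : ℝ) (hab : a < b) (f φ ψ φinv ψinv : ℝ → ℝ)
    (hf : ContinuousOn f (Set.Icc a b))
    (hmap : ∀ t ∈ Set.Icc a b, f t ∈ Set.Ioo c d)
    (hφ : ContinuousOn φ (Set.Ioo c d))
    (hψ : ContinuousOn ψ (Set.Ioo c d))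
    (hφinv : ∀ x ∈ Set.Ioo c d, φinv (φ x) = x)
    (hψmono : StrictMonoOn ψ (Set.Ioo c d))
    (hψinv : ∀ x ∈ Set.Ioo c d, ψinv (ψ x) = x)
    (hconv : ConvexOn ℝ (φ '' Set.Ioo c d) (ψ ∘ φinv)) :
    φinv ((∫ t in a..b, φ (f t)) / (b - a)) ≤
      ψinv ((∫ t in a..b, ψ (f t)) / (b - a)) := by
  rw [← uIcc_of_le hab.le] at hf hmap
  have jensen := hconv.map_interval_average_comp_leftInvOn_le hab.ne hf hmap hφ hψ hφinv
  obtain ⟨x, hx, hφx⟩ : ∃ x ∈ uIoo a b, φ (f x) = ⨍ t in a..b, φ (f t) :=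
    exists_eq_interval_average hab.ne (hφ.comp hf hmap)
  obtain ⟨y, hy, hψy⟩ : ∃ y ∈ uIoo a b, ψ (f y) = ⨍ t in a..b, ψ (f t) :=
    exists_eq_interval_average hab.ne (hψ.comp hf hmap)
  have hfx := hmap x (uIoo_subset_uIcc_self hx)
  have hfy := hmap y (uIoo_subset_uIcc_self hy)
  rw [← hφx, ← hψy, hφinv _ hfx] at jensen
  rw [← interval_average_eq_div, ← interval_average_eq_div, ← hφx, ← hψy, hφinv _ hfx,
    hψinv _ hfy]
  exact (hψmono.le_iff_le hfx hfy).1 jensen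

theorem quasi_arithmetic_mean_comparison
    (a b c d : ℝ) (hab : a < b) (f φ ψ φinv ψinv : ℝ → ℝ)
    (hf : ContinuousOn f (Set.Icc a b))
    (hmap : ∀ t ∈ Set.Icc a b, f t ∈ Set.Ioo c d)
    (hφ : ContinuousOn φ (Set.Ioo c d))
    (hψ : ContinuousOn ψ (Set.Ioo c d))
    (hφinj : Set.InjOn φ (Set.Ioo c d))
    (hφinv : ∀ x ∈ Set.Ioo c d, φinv (φ x) = x)
    (hψmono : StrictMonoOn ψ (Set.Ioo c d))
    (hψinv : ∀ x ∈ Set.Ioo c d, ψinv (ψ x) = x)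
    (hconv : ConvexOn ℝ (φ '' Set.Ioo c d) (ψ ∘ φinv)) :
    φinv ((∫ t in a..b, φ (f t)) / (b - a)) ≤
      ψinv ((∫ t in a..b, ψ (f t)) / (b - a)) :=
  quasi_arithmetic_mean_comparison_general a b c d hab f φ ψ φinv ψinv hf hmap hφ hψ hφinv hψmono
    hψinv hconv
end

section
/- If $f:[a,b]\to\mathbb{R}$ is continuous and positive and $-1<\alpha<0$, then $\left(\int_a^b \frac{1}{f(t)}\,dt\right)^\alpha \int_a^b f(t)^\alpha\,dt \leq (b-a)^{1+\alpha}$, with equality if and only if $f$ is constant. -/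
/-!
Put `u = 1 / f` and `θ = -α ∈ (0, 1)`. After scaling by `(b - a) ^ (1 + α) * (⨍ u) ^ α`, the
inequality is Jensen's inequality `⨍ u ^ θ ≤ (⨍ u) ^ θ` for the strictly concave `x ↦ x ^ θ`.
Equality in the strict Jensen inequality forces `u` to be a.e. constant, hence constant on
`[a, b]` by continuity.
-/

open MeasureTheory Set
open scoped Interval

theorem intervalAverage_eq_of_forall_Icc_eq {E : Type*} [NormedAddCommGroup E] [NormedSpace ℝ E]
    [CompleteSpace E]
    {u : ℝ → E} {a b : ℝ} {c : E} (hab : a < b) (hu : ∀ x ∈ Icc a b, u x = c) :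
    ⨍ x in a..b, u x = c := by
  rw [interval_average_eq, intervalIntegral.integral_congr (g := fun _ => c)
      (by rwa [uIcc_of_le hab.le]), intervalIntegral.integral_const, smul_smul,
    inv_mul_cancel₀ (sub_ne_zero.2 hab.ne'), one_smul]

theorem StrictConcaveOn.exists_eq_const_or_intervalAverage_comp_lt {g u : ℝ → ℝ} {s : Set ℝ}
    {a b : ℝ} (hg : StrictConcaveOn ℝ s g) (hgc : ContinuousOn g s) (hsc : IsClosed s)
    (hab : a < b) (hu : ContinuousOn u (Icc a b)) (hus : MapsTo u (Icc a b) s) :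
    (∃ c, ∀ x ∈ Icc a b, u x = c) ∨ ⨍ x in a..b, g (u x) < g (⨍ x in a..b, u x) := by
  rw [uIoc_of_le hab.le, Measure.restrict_congr_set Ioc_ae_eq_Icc]
  refine (hg.ae_eq_const_or_lt_map_average hgc hsc
    ((ae_restrict_mem measurableSet_Icc).mono hus) hu.integrableOn_Icc
    (hgc.comp hu hus).integrableOn_Icc).imp
      (fun hae => ⟨⨍ x in Icc a b, u x, fun x hx => ?_⟩) id
  exact Measure.eqOn_of_ae_eq hae hu continuousOn_const
    (by rw [interior_Icc, closure_Ioo hab.ne]) hx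

theorem StrictConcaveOn.intervalAverage_comp_le_and_eq_iff {g u : ℝ → ℝ} {s : Set ℝ}
    {a b : ℝ} (hg : StrictConcaveOn ℝ s g) (hgc : ContinuousOn g s) (hsc : IsClosed s)
    (hab : a < b) (hu : ContinuousOn u (Icc a b)) (hus : MapsTo u (Icc a b) s) :
    ⨍ x in a..b, g (u x) ≤ g (⨍ x in a..b, u x) ∧
      (⨍ x in a..b, g (u x) = g (⨍ x in a..b, u x) ↔ ∃ c, ∀ x ∈ Icc a b, u x = c) := by
  have h_const : (∃ c, ∀ x ∈ Icc a b, u x = c) →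
      ⨍ x in a..b, g (u x) = g (⨍ x in a..b, u x) := fun ⟨c, hc⟩ => by
    rw [intervalAverage_eq_of_forall_Icc_eq hab hc,
      intervalAverage_eq_of_forall_Icc_eq hab fun x hx => congrArg g (hc x hx)]
  rcases hg.exists_eq_const_or_intervalAverage_comp_lt hgc hsc hab hu hus with h | h
  · exact ⟨(h_const h).le, fun _ => h, fun _ => h_const h⟩
  · exact ⟨h.le, fun h' => absurd h' h.ne, fun h' => absurd (h_const h') h.ne⟩

theorem intervalIntegral_eq_mul_intervalAverage {a b : ℝ} (hab : a ≠ b) (u : ℝ → ℝ) :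
    ∫ x in a..b, u x = (b - a) * ⨍ x in a..b, u x := by
  rw [interval_average_eq, smul_eq_mul, mul_inv_cancel_left₀ (sub_ne_zero.2 hab.symm)]

section RpowAlgebra

variable {T x y α : ℝ}

theorem mul_rpow_mul_mul_eq (hT : 0 < T) (hx : 0 < x) :
    (T * x) ^ α * (T * y) = T ^ (1 + α) * x ^ α * y := by
  rw [Real.mul_rpow hT.le hx.le, Real.rpow_add hT, Real.rpow_one]
  ring

theorem rpow_one_add_eq_mul_rpow_neg (hx : 0 < x) :
    T ^ (1 + α) = T ^ (1 + α) * x ^ α * x ^ (-α) := by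
  rw [mul_assoc, ← Real.rpow_add hx, add_neg_cancel, Real.rpow_zero, mul_one]

theorem mul_rpow_mul_mul_le_rpow_one_add_iff (hT : 0 < T) (hx : 0 < x) :
    (T * x) ^ α * (T * y) ≤ T ^ (1 + α) ↔ y ≤ x ^ (-α) := by
  rw [mul_rpow_mul_mul_eq hT hx]
  conv_lhs => rhs; rw [rpow_one_add_eq_mul_rpow_neg hx]
  rw [mul_le_mul_iff_right₀ (by positivity)]

theorem mul_rpow_mul_mul_eq_rpow_one_add_iff (hT : 0 < T) (hx : 0 < x) :
    (T * x) ^ α * (T * y) = T ^ (1 + α) ↔ y = x ^ (-α) := by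
  rw [mul_rpow_mul_mul_eq hT hx]
  conv_lhs => rhs; rw [rpow_one_add_eq_mul_rpow_neg hx]
  rw [mul_right_inj' (by positivity)]

end RpowAlgebra

theorem reciprocal_power_inequality_concave_case
    (a b α : ℝ) (hab : a < b) (f : ℝ → ℝ)
    (hf : ContinuousOn f (Set.Icc a b))
    (hfpos : ∀ t ∈ Set.Icc a b, 0 < f t)
    (hα : -1 < α) (hα' : α < 0) :
    (∫ t in a..b, 1 / f t) ^ α * (∫ t in a..b, (f t) ^ α) ≤ (b - a) ^ (1 + α) ∧
    ((∫ t in a..b, 1 / f t) ^ α * (∫ t in a..b, (f t) ^ α) = (b - a) ^ (1 + α) ↔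
      ∃ k : ℝ, ∀ t ∈ Set.Icc a b, f t = k) := by
  have hT : 0 < b - a := sub_pos.2 hab
  have hu : ContinuousOn (fun t => (f t)⁻¹) (Icc a b) := hf.inv₀ fun t ht => (hfpos t ht).ne'
  have h_avg_pos : 0 < ⨍ t in a..b, (f t)⁻¹ := by
    rw [interval_average_eq, smul_eq_mul]
    refine mul_pos (inv_pos.2 hT) (intervalIntegral.intervalIntegral_pos_of_pos_on ?_ ?_ hab)
    · exact (hu.mono (uIcc_of_le hab.le).subset).intervalIntegrable
    · exact fun t ht => inv_pos.2 (hfpos t (Ioo_subset_Icc_self ht))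
  have h_rpow : ∫ t in a..b, f t ^ α = ∫ t in a..b, ((f t)⁻¹) ^ (-α) := by
    refine intervalIntegral.integral_congr fun t ht => ?_
    rw [uIcc_of_le hab.le] at ht
    simp only [Real.inv_rpow (hfpos t ht).le, Real.rpow_neg (hfpos t ht).le, inv_inv]
  have h_concave := Real.strictConcaveOn_rpow (neg_pos.2 hα') (by linarith)
  have jensen := h_concave.intervalAverage_comp_le_and_eq_iff
    (fun x _ => (Real.continuousAt_rpow_const x _ (Or.inr (by linarith))).continuousWithinAt)
    isClosed_Ici hab hu fun t ht => (inv_pos.2 (hfpos t ht)).le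
  simp_rw [h_rpow, one_div, intervalIntegral_eq_mul_intervalAverage hab.ne,
    mul_rpow_mul_mul_le_rpow_one_add_iff hT h_avg_pos,
    mul_rpow_mul_mul_eq_rpow_one_add_iff hT h_avg_pos]
  simp_rw [inv_eq_iff_eq_inv] at jensen
  exact ⟨jensen.1,
    jensen.2.trans (inv_surjective.exists (p := fun k => ∀ t ∈ Icc a b, f t = k)).symm⟩
end

section
/- Let $\varphi:[a,b]\to\mathbb{R}$ be positive and continuous, $B\in\mathbb{R}$, and set $C=\frac{1}{b-a}\left(\int_a^b \ln\varphi(t)\,dt + B\right)$. Then for every $C^1$ function $y:[a,b]\to\mathbb{R}$ with $y(a)=0$ and $y(b)=B$, one has $\int_a^b \varphi(t)\,e^{y'(t)}\,dt \geq (b-a)e^{C}$, and equality holds for $y(t)=-\int_a^t \ln\varphi(s)\,ds + C(t-a)$. -/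
/-!
Writing `φ e^{y'} = e^{g}` with `g = log φ + y'`, the boundary conditions fix `∫ g = (b - a) C`,
so `C` is the mean of `g`. The tangent line of `exp` at `C` gives `e^{g} ≥ e^{C} (1 + g - C)`, and
integrating yields `∫ φ e^{y'} ≥ (b - a) e^{C}` (Jensen's inequality for `exp`), with equality
when `g ≡ C`, i.e. `y' = C - log φ`.
-/

open Real Set intervalIntegral
open MeasureTheory (volume)

lemma exp_mul_one_add_sub_le_exp (x c : ℝ) : exp c * (1 + x - c) ≤ exp x := by
  calc exp c * (1 + x - c) ≤ exp c * exp (x - c) := by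
        gcongr
        linarith [add_one_le_exp (x - c)]
    _ = exp x := by rw [← exp_add, add_sub_cancel]

lemma mul_exp_integral_div_le_integral_exp {a b : ℝ} (hab : a ≤ b) {g : ℝ → ℝ}
    (hg : ContinuousOn g (Icc a b)) :
    (b - a) * exp ((∫ t in a..b, g t) / (b - a)) ≤ ∫ t in a..b, exp (g t) := by
  rcases hab.eq_or_lt with rfl | hab
  · simp
  set c := (∫ t in a..b, g t) / (b - a)
  have hg_int : IntervalIntegrable g volume a b :=
    hg.intervalIntegrable_of_Icc hab.le
  have hexp_int : IntervalIntegrable (fun t => exp (g t)) volume a b :=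
    (continuous_exp.comp_continuousOn hg).intervalIntegrable_of_Icc hab.le
  have htangent_int : IntervalIntegrable (fun t => 1 + g t - c) volume a b :=
    (intervalIntegrable_const.add hg_int).sub intervalIntegrable_const
  have htangent : ∫ t in a..b, (1 + g t - c) = b - a := by
    rw [integral_sub (intervalIntegrable_const.add hg_int) intervalIntegrable_const,
      integral_add intervalIntegrable_const hg_int, integral_const, integral_const,
      smul_eq_mul, smul_eq_mul]
    linarith [div_mul_cancel₀ (∫ t in a..b, g t) (sub_pos.mpr hab).ne']
  calc (b - a) * exp c = ∫ t in a..b, exp c * (1 + g t - c) := by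
        rw [integral_const_mul, htangent, mul_comm]
    _ ≤ ∫ t in a..b, exp (g t) :=
        integral_mono_on hab.le (htangent_int.const_mul _) hexp_int
          fun t _ => exp_mul_one_add_sub_le_exp (g t) c

lemma integral_eq_sub_of_hasDerivAt_of_continuousOn_Icc {a b : ℝ} (hab : a ≤ b)
    {y y' : ℝ → ℝ} (hderiv : ∀ t ∈ Icc a b, HasDerivAt y (y' t) t)
    (hy' : ContinuousOn y' (Icc a b)) :
    ∫ t in a..b, y' t = y b - y a :=
  integral_eq_sub_of_hasDerivAt (fun t ht => hderiv t (by rwa [uIcc_of_le hab] at ht))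
    (hy'.intervalIntegrable_of_Icc hab)

lemma mul_exp_neg_log_add {p : ℝ} (hp : 0 < p) (c : ℝ) : p * exp (-log p + c) = exp c := by
  rw [exp_add, exp_neg, exp_log hp, mul_inv_cancel_left₀ hp.ne']

theorem variational_exp_problem
    (a b B : ℝ) (hab : a < b) (φ : ℝ → ℝ)
    (hφc : ContinuousOn φ (Set.Icc a b))
    (hφpos : ∀ t ∈ Set.Icc a b, 0 < φ t)
    (C : ℝ) (hC : C = ((∫ t in a..b, Real.log (φ t)) + B) / (b - a)) :
    (∀ y y' : ℝ → ℝ, (∀ t ∈ Set.Icc a b, HasDerivAt y (y' t) t) →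
      ContinuousOn y' (Set.Icc a b) → y a = 0 → y b = B →
      (b - a) * Real.exp C ≤ ∫ t in a..b, φ t * Real.exp (y' t)) ∧
    (∫ t in a..b, φ t * Real.exp (-(Real.log (φ t)) + C)) = (b - a) * Real.exp C ∧
    (fun t : ℝ => -(∫ s in a..t, Real.log (φ s)) + C * (t - a)) a = 0 ∧
    (fun t : ℝ => -(∫ s in a..t, Real.log (φ s)) + C * (t - a)) b = B := by
  have hlogφ : ContinuousOn (fun t => log (φ t)) (Icc a b) :=
    hφc.log fun t ht => (hφpos t ht).ne'
  have hφ_eq : ∀ t ∈ uIcc a b, ∀ c, φ t * exp (-log (φ t) + c) = exp c := fun t ht =>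
    mul_exp_neg_log_add (hφpos t (by rwa [uIcc_of_le hab.le] at ht))
  refine ⟨fun y y' hderiv hy' ha hb => ?_, ?_, by simp, ?_⟩
  · have hg_eq : ∀ t ∈ uIcc a b, exp (log (φ t) + y' t) = φ t * exp (y' t) := fun t ht => by
      simpa using (hφ_eq t ht (log (φ t) + y' t)).symm
    have hmean : (∫ t in a..b, (log (φ t) + y' t)) / (b - a) = C := by
      rw [integral_add (hlogφ.intervalIntegrable_of_Icc hab.le)
        (hy'.intervalIntegrable_of_Icc hab.le),
        integral_eq_sub_of_hasDerivAt_of_continuousOn_Icc hab.le hderiv hy', ha, hb, sub_zero, hC]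
    rw [← integral_congr hg_eq, ← hmean]
    exact mul_exp_integral_div_le_integral_exp hab.le (hlogφ.add hy')
  · rw [integral_congr fun t ht => hφ_eq t ht C, integral_const, smul_eq_mul]
  · simp only
    rw [hC]
    field_simp [(sub_pos.mpr hab).ne']
    ring
end

section
/- Let $\varphi:\mathbb{R}\to\mathbb{R}$ be positive and continuous, $G(x)=\int_0^x\varphi(s)\,ds$, $B>0$, $C=G(B)/(b-a)$, and $\alpha<0$ or $\alpha>1$. Then for every $C^1$ function $y:[a,b]\to\mathbb{R}$ with $y'>0$, $y(a)=0$, and $y(b)=B$, one has $\int_a^b \left(\varphi(y(t))\,y'(t)\right)^\alpha\,dt \geq (b-a)C^\alpha$, and equality holds for $y(t)=G^{-1}(C(t-a))$. -/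
/-!
Writing `f = φ(y) y' = (G ∘ y)'`, every admissible `y` has `∫ₐᵇ f = G B = (b - a) C`. For `α ∉ (0, 1)`
the graph of `x ↦ x ^ α` on `(0, ∞)` lies above its tangent line at `C`; integrating the tangent
inequality at `f t`, the linear term drops out and `∫ₐᵇ f ^ α ≥ (b - a) C ^ α`. The extremal `y` makes
`G ∘ y` affine with slope `C`, so its integrand is constantly `C ^ α`.
-/

open Set MeasureTheory intervalIntegral

namespace Real

lemma one_add_mul_self_le_rpow_one_add_of_nonpos {s : ℝ} (hs : -1 < s) {p : ℝ} (hp : p ≤ 0) :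
    1 + p * s ≤ (1 + s) ^ p := by
  have hpos : 0 < 1 + s := by linarith
  have hlog : p * s ≤ p * log (1 + s) :=
    mul_le_mul_of_nonpos_left (by linarith [log_le_sub_one_of_pos hpos]) hp
  calc 1 + p * s ≤ p * log (1 + s) + 1 := by linarith
    _ ≤ exp (p * log (1 + s)) := add_one_le_exp _
    _ = (1 + s) ^ p := by rw [rpow_def_of_pos hpos, mul_comm]

lemma add_mul_sub_le_rpow {p : ℝ} (hp : p ≤ 0 ∨ 1 ≤ p) {c x : ℝ} (hc : 0 < c) (hx : 0 < x) :
    c ^ p + p * c ^ (p - 1) * (x - c) ≤ x ^ p := by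
  have hs : -1 < x / c - 1 := by have := div_pos hx hc; linarith
  have bernoulli : 1 + p * (x / c - 1) ≤ (1 + (x / c - 1)) ^ p := by
    rcases hp with hp | hp
    · exact one_add_mul_self_le_rpow_one_add_of_nonpos hs hp
    · exact one_add_mul_self_le_rpow_one_add hs.le hp
  rw [add_sub_cancel, div_rpow hx.le hc.le, le_div_iff₀ (rpow_pos_of_pos hc p)] at bernoulli
  rw [rpow_sub_one hc.ne']
  refine le_of_eq_of_le ?_ bernoulli
  field_simp

end Real

theorem mul_rpow_average_le_integral_rpow {f : ℝ → ℝ} {a b p : ℝ} (hp : p ≤ 0 ∨ 1 ≤ p)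
    (hab : a < b) (hf : ContinuousOn f (Icc a b)) (hf_pos : ∀ t ∈ Icc a b, 0 < f t) :
    (b - a) * ((∫ t in a..b, f t) / (b - a)) ^ p ≤ ∫ t in a..b, f t ^ p := by
  have hba : 0 < b - a := sub_pos.2 hab
  have hf_int : IntervalIntegrable f volume a b := hf.intervalIntegrable_of_Icc hab.le
  set c := (∫ t in a..b, f t) / (b - a) with hc
  have hc_pos : 0 < c := div_pos (intervalIntegral_pos_of_pos_on hf_int
    (fun t ht => hf_pos t (Ioo_subset_Icc_self ht)) hab) hba
  have hf_avg : ∫ t in a..b, f t = (b - a) * c := by rw [hc]; field_simp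
  have hfp_int : IntervalIntegrable (fun t => f t ^ p) volume a b :=
    (hf.rpow_const fun t ht => Or.inl (hf_pos t ht).ne').intervalIntegrable_of_Icc hab.le
  calc (b - a) * c ^ p
      = ∫ t in a..b, c ^ p + p * c ^ (p - 1) * (f t - c) := by
        rw [integral_add intervalIntegrable_const ((hf_int.sub intervalIntegrable_const).const_mul _),
          intervalIntegral.integral_const_mul, integral_sub hf_int intervalIntegrable_const]
        simp only [intervalIntegral.integral_const, smul_eq_mul]
        rw [hf_avg]
        ring
    _ ≤ ∫ t in a..b, f t ^ p :=
        integral_mono_on hab.le (intervalIntegrable_const.add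
          ((hf_int.sub intervalIntegrable_const).const_mul _)) hfp_int
          fun t ht => Real.add_mul_sub_le_rpow hp hc_pos (hf_pos t ht)

theorem strictMono_integral_of_pos {φ : ℝ → ℝ} (hφc : Continuous φ) (hφpos : ∀ x, 0 < φ x)
    (c : ℝ) : StrictMono fun x => ∫ s in c..x, φ s :=
  strictMono_of_deriv_pos fun x => Continuous.deriv_integral φ hφc c x ▸ hφpos x

theorem mul_deriv_comp_of_leftInverse {G Ginv φ u : ℝ → ℝ} {x t u' : ℝ}
    (hG : HasStrictDerivAt G (φ x) x) (hφ : φ x ≠ 0) (hGinv : ∀ x, Ginv (G x) = x)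
    (hu : HasDerivAt u u' t) (hut : u t = G x) :
    φ (Ginv (u t)) * deriv (fun s => Ginv (u s)) t = u' := by
  have hGinv' : HasDerivAt Ginv (φ x)⁻¹ (u t) :=
    hut ▸ (hG.to_local_left_inverse hφ (Filter.Eventually.of_forall hGinv)).hasDerivAt
  have hcomp : HasDerivAt (fun s => Ginv (u s)) ((φ x)⁻¹ * u') t := hGinv'.comp t hu
  rw [hcomp.deriv, hut, hGinv]
  field_simp

theorem mul_deriv_leftInverse_comp_affine {G Ginv φ : ℝ → ℝ}
    (hG : ∀ x, HasStrictDerivAt G (φ x) x) (hφ : ∀ x, φ x ≠ 0) (hGinv : ∀ x, Ginv (G x) = x)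
    {C a t : ℝ} (ht : C * (t - a) ∈ range G) :
    φ (Ginv (C * (t - a))) * deriv (fun s => Ginv (C * (s - a))) t = C := by
  obtain ⟨x, hx⟩ := ht
  have hu : HasDerivAt (fun s => C * (s - a)) C t := by
    simpa using ((hasDerivAt_id t).sub_const a).const_mul C
  exact mul_deriv_comp_of_leftInverse (hG x) (hφ x) hGinv hu hx.symm

theorem variational_power_problem_min
    (a b B α : ℝ) (hab : a < b) (hB : 0 < B)
    (hα : α < 0 ∨ 1 < α)
    (φ : ℝ → ℝ) (hφc : Continuous φ) (hφpos : ∀ x, 0 < φ x)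
    (G Ginv : ℝ → ℝ) (hG : ∀ x, G x = ∫ s in (0:ℝ)..x, φ s)
    (hGinv : ∀ x, Ginv (G x) = x)
    (C : ℝ) (hC : C = G B / (b - a)) :
    (∀ y y' : ℝ → ℝ, (∀ t ∈ Set.Icc a b, HasDerivAt y (y' t) t) →
      ContinuousOn y' (Set.Icc a b) → (∀ t ∈ Set.Icc a b, 0 < y' t) →
      y a = 0 → y b = B →
      (b - a) * C ^ α ≤ ∫ t in a..b, (φ (y t) * y' t) ^ α) ∧
    (∫ t in a..b,
        (φ (Ginv (C * (t - a))) * deriv (fun s : ℝ => Ginv (C * (s - a))) t) ^ α) =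
      (b - a) * C ^ α := by
  have hα' : α ≤ 0 ∨ 1 ≤ α := hα.imp le_of_lt le_of_lt
  have hG_eq : G = fun x => ∫ s in (0:ℝ)..x, φ s := funext hG
  have hG_deriv : ∀ x, HasStrictDerivAt G (φ x) x := hG_eq ▸ hφc.integral_hasStrictDerivAt 0
  have hG_mono : StrictMono G := hG_eq ▸ strictMono_integral_of_pos hφc hφpos 0
  have hG_zero : G 0 = 0 := by simp [hG]
  refine ⟨fun y y' hy hy' hy'_pos hya hyb => ?_, ?_⟩
  · have hφy_int : ∫ t in a..b, φ (y t) * y' t = G B := by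
      rw [← uIcc_of_le hab.le] at hy hy'
      rw [hG, ← hyb, ← hya, ← integral_comp_mul_deriv hy hy' hφc]
      rfl
    have := mul_rpow_average_le_integral_rpow (f := fun t => φ (y t) * y' t) hα' hab
      ((hφc.comp_continuousOn fun t ht => (hy t ht).continuousAt.continuousWithinAt).mul hy')
      fun t ht => mul_pos (hφpos _) (hy'_pos t ht)
    rwa [hφy_int, ← hC] at this
  · have hC_range : ∀ t ∈ uIcc a b, C * (t - a) ∈ range G := by
      have hC_pos : 0 < C := hC ▸ div_pos (hG_zero ▸ hG_mono hB) (sub_pos.2 hab)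
      intro t ht
      rw [uIcc_of_le hab.le] at ht
      refine image_subset_range _ _ (intermediate_value_Icc hB.le
        (fun z _ => (hG_deriv z).hasDerivAt.continuousAt.continuousWithinAt) ?_)
      rw [hG_zero, show G B = C * (b - a) by rw [hC, div_mul_cancel₀ _ (sub_pos.2 hab).ne']]
      exact ⟨by nlinarith [ht.1], by nlinarith [ht.2]⟩
    rw [integral_congr (g := fun _ => C ^ α) fun t ht => by
      simp only [mul_deriv_leftInverse_comp_affine hG_deriv (fun x => (hφpos x).ne') hGinv
        (hC_range t ht)], intervalIntegral.integral_const, smul_eq_mul]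
end

section
/- Let $\varphi:\mathbb{R}\to\mathbb{R}$ be positive and continuous, $G(x)=\int_0^x\varphi(s)\,ds$, $B>0$, $C=G(B)/(b-a)$, and $0<\alpha<1$. Then for every $C^1$ function $y:[a,b]\to\mathbb{R}$ with $y'>0$, $y(a)=0$, and $y(b)=B$, one has $\int_a^b \left(\varphi(y(t))\,y'(t)\right)^\alpha\,dt \leq (b-a)C^\alpha$, and equality holds for $y(t)=G^{-1}(C(t-a))$. -/
/-!
Substituting `u = y t` turns `∫ φ (y t) * y' t` into `G B = (b - a) * C` for every admissible `y`,
so by Jensen's inequality for the concave function `x ↦ x ^ α` the functional is at most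
`(b - a) * C ^ α`. The extremal `G⁻¹ (C * (t - a))` makes the integrand `φ (y t) * y' t`
identically equal to `C`, which is the equality case of Jensen.
-/

open Set MeasureTheory

theorem intervalIntegral.integral_rpow_le_mul_average_rpow {f : ℝ → ℝ} {a b p : ℝ}
    (hab : a < b) (hp₀ : 0 ≤ p) (hp₁ : p ≤ 1) (hf : ContinuousOn f (Icc a b))
    (hf₀ : ∀ t ∈ Icc a b, 0 ≤ f t) :
    ∫ t in a..b, f t ^ p ≤ (b - a) * ((∫ t in a..b, f t) / (b - a)) ^ p := by
  have hba : 0 < b - a := sub_pos.2 hab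
  have hvol : volume (Ioc a b) ≠ 0 := by simp [hab]
  have hf₀' : ∀ᵐ t ∂volume.restrict (Ioc a b), f t ∈ Ici 0 :=
    (ae_restrict_iff' measurableSet_Ioc).2 <|
      ae_of_all _ fun t ht => hf₀ t (Ioc_subset_Icc_self ht)
  have hfp : ContinuousOn (fun t => f t ^ p) (Icc a b) := hf.rpow_const fun _ _ => Or.inr hp₀
  have jensen := (Real.concaveOn_rpow hp₀ hp₁).le_map_set_average
    (continuousOn_id.rpow_const fun _ _ => Or.inr hp₀) isClosed_Ici hvol measure_Ioc_lt_top.ne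
    hf₀' (hf.integrableOn_Icc.mono_set Ioc_subset_Icc_self)
    (hfp.integrableOn_Icc.mono_set Ioc_subset_Icc_self)
  rw [setAverage_eq, setAverage_eq, Real.volume_real_Ioc_of_le hab.le, smul_eq_mul,
    smul_eq_mul, ← intervalIntegral.integral_of_le hab.le,
    ← intervalIntegral.integral_of_le hab.le, inv_mul_eq_div, inv_mul_eq_div,
    div_le_iff₀' hba] at jensen
  exact jensen

theorem StrictMono.range_mem_nhds {f : ℝ → ℝ} (hf : StrictMono f) (hfc : Continuous f) (x : ℝ) :
    range f ∈ nhds (f x) :=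
  Filter.mem_of_superset (Ioo_mem_nhds (hf (sub_one_lt x)) (hf (lt_add_one x)))
    ((intermediate_value_Ioo (by linarith) hfc.continuousOn).trans (image_subset_range _ _))

theorem StrictMono.hasDerivAt_of_leftInverse {f g : ℝ → ℝ} {f' x : ℝ} (hf : StrictMono f)
    (hfc : Continuous f) (hg : Function.LeftInverse g f) (hd : HasDerivAt f f' x)
    (hf' : f' ≠ 0) : HasDerivAt g f'⁻¹ (f x) := by
  have hrange := hf.range_mem_nhds hfc x
  have hgc : ContinuousAt g (f x) := by
    refine continuousAt_of_monotoneOn_of_image_mem_nhds ?_ hrange ?_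
    · rintro _ ⟨u, rfl⟩ _ ⟨v, rfl⟩ huv
      rw [hg u, hg v]
      exact hf.le_iff_le.1 huv
    · rw [← range_comp, hg.comp_eq_id, range_id]
      exact Filter.univ_mem
  refine HasDerivAt.of_local_left_inverse hgc (by rwa [hg x]) hf' ?_
  filter_upwards [hrange] with _ ⟨u, hu⟩
  rw [← hu, hg u]

theorem intervalIntegral.integral_rpow_comp_mul_deriv_le {φ y y' : ℝ → ℝ} {a b p : ℝ}
    (hab : a < b) (hp₀ : 0 ≤ p) (hp₁ : p ≤ 1) (hφ : Continuous φ)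
    (hy : ∀ t ∈ Icc a b, HasDerivAt y (y' t) t) (hy' : ContinuousOn y' (Icc a b))
    (h₀ : ∀ t ∈ Icc a b, 0 ≤ φ (y t) * y' t) :
    ∫ t in a..b, (φ (y t) * y' t) ^ p ≤ (b - a) * ((∫ u in y a..y b, φ u) / (b - a)) ^ p := by
  have hyc : ContinuousOn y (Icc a b) := fun t ht => (hy t ht).continuousAt.continuousWithinAt
  have hc : ContinuousOn (fun t => φ (y t) * y' t) (Icc a b) := (hφ.comp_continuousOn hyc).mul hy'
  rw [← uIcc_of_le hab.le] at hy hy'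
  rw [← intervalIntegral.integral_comp_mul_deriv hy hy' hφ]
  exact integral_rpow_le_mul_average_rpow hab hp₀ hp₁ hc h₀

theorem StrictMono.mul_deriv_leftInverse_comp_mul_sub {G Ginv φ : ℝ → ℝ} (hG : StrictMono G)
    (hGc : Continuous G) (hinv : Function.LeftInverse Ginv G) (hGd : ∀ x, HasDerivAt G (φ x) x)
    (hφ : ∀ x, φ x ≠ 0) {C a t : ℝ} (ht : C * (t - a) ∈ range G) :
    φ (Ginv (C * (t - a))) * deriv (fun s => Ginv (C * (s - a))) t = C := by
  obtain ⟨x, hx⟩ := ht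
  have hGinvd : HasDerivAt Ginv (φ x)⁻¹ (C * (t - a)) :=
    hx ▸ hG.hasDerivAt_of_leftInverse hGc hinv (hGd x) (hφ x)
  have hlin : HasDerivAt (fun s => C * (s - a)) C t := by
    simpa using ((hasDerivAt_id t).sub_const a).const_mul C
  have hd : HasDerivAt (fun s => Ginv (C * (s - a))) ((φ x)⁻¹ * C) t := hGinvd.comp t hlin
  rw [hd.deriv, ← hx, hinv, mul_inv_cancel_left₀ (hφ x)]

theorem variational_power_problem_max_general
    (a b B α : ℝ) (hab : a < b)
    (hα0 : 0 < α) (hα1 : α < 1)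
    (φ : ℝ → ℝ) (hφc : Continuous φ) (hφpos : ∀ x, 0 < φ x)
    (G Ginv : ℝ → ℝ) (hG : ∀ x, G x = ∫ s in (0:ℝ)..x, φ s)
    (hGinv : ∀ x, Ginv (G x) = x)
    (C : ℝ) (hC : C = G B / (b - a)) :
    (∀ y y' : ℝ → ℝ, (∀ t ∈ Set.Icc a b, HasDerivAt y (y' t) t) →
      ContinuousOn y' (Set.Icc a b) → (∀ t ∈ Set.Icc a b, 0 < y' t) →
      y a = 0 → y b = B →
      (∫ t in a..b, (φ (y t) * y' t) ^ α) ≤ (b - a) * C ^ α) ∧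
    (∫ t in a..b,
        (φ (Ginv (C * (t - a))) * deriv (fun s : ℝ => Ginv (C * (s - a))) t) ^ α) =
      (b - a) * C ^ α := by
  have hGd (x : ℝ) : HasDerivAt G (φ x) x := by
    rw [funext hG]
    exact (hφc.integral_hasStrictDerivAt 0 x).hasDerivAt
  have hGc : Continuous G := continuous_iff_continuousAt.2 fun x => (hGd x).continuousAt
  have hG0 : G 0 = 0 := by simp [hG]
  have hCba : C * (b - a) = G B := by rw [hC]; field_simp [(sub_pos.2 hab).ne']
  refine ⟨fun y y' hy hy'c hy'pos hya hyb => ?_, ?_⟩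
  · calc ∫ t in a..b, (φ (y t) * y' t) ^ α
        ≤ (b - a) * ((∫ u in y a..y b, φ u) / (b - a)) ^ α :=
          intervalIntegral.integral_rpow_comp_mul_deriv_le hab hα0.le hα1.le hφc hy hy'c
            fun t ht => (mul_pos (hφpos _) (hy'pos t ht)).le
      _ = (b - a) * C ^ α := by rw [hya, hyb, ← hG, hC]
  · have extremal : ∀ t ∈ uIcc a b,
        (φ (Ginv (C * (t - a))) * deriv (fun s : ℝ => Ginv (C * (s - a))) t) ^ α = C ^ α := by
      intro t ht
      rw [uIcc_of_le hab.le] at ht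
      have hmem : C * (t - a) ∈ uIcc (G 0) (G B) := by
        rw [hG0, ← hCba, mem_uIcc]
        rcases le_total 0 C with hC0 | hC0
        · exact Or.inl ⟨by nlinarith [ht.1], by nlinarith [ht.2]⟩
        · exact Or.inr ⟨by nlinarith [ht.2], by nlinarith [ht.1]⟩
      obtain ⟨x, -, hx⟩ := intermediate_value_uIcc hGc.continuousOn hmem
      rw [(strictMono_of_hasDerivAt_pos hGd hφpos).mul_deriv_leftInverse_comp_mul_sub hGc hGinv
        hGd (fun x => (hφpos x).ne') ⟨x, hx⟩]
    rw [intervalIntegral.integral_congr extremal, intervalIntegral.integral_const, smul_eq_mul]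

theorem variational_power_problem_max
    (a b B α : ℝ) (hab : a < b) (hB : 0 < B)
    (hα0 : 0 < α) (hα1 : α < 1)
    (φ : ℝ → ℝ) (hφc : Continuous φ) (hφpos : ∀ x, 0 < φ x)
    (G Ginv : ℝ → ℝ) (hG : ∀ x, G x = ∫ s in (0:ℝ)..x, φ s)
    (hGinv : ∀ x, Ginv (G x) = x)
    (C : ℝ) (hC : C = G B / (b - a)) :
    (∀ y y' : ℝ → ℝ, (∀ t ∈ Set.Icc a b, HasDerivAt y (y' t) t) →
      ContinuousOn y' (Set.Icc a b) → (∀ t ∈ Set.Icc a b, 0 < y' t) →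
      y a = 0 → y b = B →
      (∫ t in a..b, (φ (y t) * y' t) ^ α) ≤ (b - a) * C ^ α) ∧
    (∫ t in a..b,
        (φ (Ginv (C * (t - a))) * deriv (fun s : ℝ => Ginv (C * (s - a))) t) ^ α) =
      (b - a) * C ^ α :=
  variational_power_problem_max_general a b B α hab hα0 hα1 φ hφc hφpos G Ginv hG hGinv C hC
end
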